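/- arXiv:hep-th/9902053 — 4 statements merged into one kernel-verified Lean document; each statement's English description precedes it below -/
import Mathlib

section
/- Let M ≥ 2 and T : ℕ → ℝ → ℝ be positive functions satisfying the T-system T_j(x+1)T_j(x-1) = 1 + T_{j+1}(x)T_{j-1}(x) (1 ≤ j ≤ 2M-1), T_0 = 1, duality T_{M-j} = T_{M+j}, and additionally the generalized T-system identity T_M(x+2)·T_1(x+(M+3)) = T_{M-1}(x+1) + T_{M-1}(x+3) for all x. Define ψ(x) = arcsin(1/√(T_M(x)T_M(x+2))). Then sin(ψ(x) + ψ(x+2)) = T_1(x+(M+3))/√(T_M(x)·T_M(x+4)). -/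
/-!
At the middle node the T-system and the duality `T_{M+1} = T_{M-1}` give
`T_M(y) T_M(y+2) = 1 + T_{M-1}(y+1)²`, so `ψ(y)` is the angle of a right triangle with legs
`1` and `T_{M-1}(y+1)`: `sin ψ(y) = 1/√(1+c²)`, `cos ψ(y) = c/√(1+c²)` with `c = T_{M-1}(y+1)`.
The addition formula then turns `sin (ψ(x) + ψ(x+2))` into
`(T_{M-1}(x+1) + T_{M-1}(x+3)) / (T_M(x+2) √(T_M(x) T_M(x+4)))`, and the generalized T-system
identity cancels the factor `T_M(x+2)`.
-/

open Real

lemma one_div_sqrt_one_add_sq_le_one (c : ℝ) : 1 / √(1 + c ^ 2) ≤ 1 := by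
  rw [div_le_one (by positivity), one_le_sqrt]
  nlinarith [sq_nonneg c]

lemma sin_arcsin_one_div_sqrt_one_add_sq (c : ℝ) :
    sin (arcsin (1 / √(1 + c ^ 2))) = 1 / √(1 + c ^ 2) :=
  sin_arcsin (by linarith [show 0 ≤ 1 / √(1 + c ^ 2) by positivity])
    (one_div_sqrt_one_add_sq_le_one c)

lemma cos_arcsin_one_div_sqrt_one_add_sq {c : ℝ} (hc : 0 ≤ c) :
    cos (arcsin (1 / √(1 + c ^ 2))) = c / √(1 + c ^ 2) := by
  have hpos : 0 < 1 + c ^ 2 := by positivity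
  have hsq : 1 - (1 / √(1 + c ^ 2)) ^ 2 = c ^ 2 / (1 + c ^ 2) := by
    rw [div_pow, sq_sqrt hpos.le]
    field_simp
    ring
  rw [cos_arcsin, hsq, sqrt_div (sq_nonneg c), sqrt_sq hc]

lemma sin_add_arcsin_one_div_sqrt_one_add_sq {c d : ℝ} (hc : 0 ≤ c) (hd : 0 ≤ d) :
    sin (arcsin (1 / √(1 + c ^ 2)) + arcsin (1 / √(1 + d ^ 2))) =
      (c + d) / (√(1 + c ^ 2) * √(1 + d ^ 2)) := by
  rw [sin_add, sin_arcsin_one_div_sqrt_one_add_sq, sin_arcsin_one_div_sqrt_one_add_sq,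
    cos_arcsin_one_div_sqrt_one_add_sq hc, cos_arcsin_one_div_sqrt_one_add_sq hd]
  field_simp
  ring

lemma sqrt_mul_mul_sqrt_mul {a b c : ℝ} (ha : 0 ≤ a) (hb : 0 ≤ b) :
    √(a * b) * √(b * c) = b * √(a * c) := by
  rw [← sqrt_mul (mul_nonneg ha hb), show a * b * (b * c) = b ^ 2 * (a * c) by ring,
    sqrt_mul (sq_nonneg b), sqrt_sq hb]

lemma T_mul_T_shift_two_of_dual {M : ℕ} (hM : 1 ≤ M) {T : ℕ → ℝ → ℝ}
    (hsys : ∀ j, 1 ≤ j → j ≤ 2*M-1 → ∀ x : ℝ,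
      T j (x+1) * T j (x-1) = 1 + T (j+1) x * T (j-1) x)
    (hdual : ∀ j, 1 ≤ j → j ≤ M → ∀ x : ℝ, T (M-j) x = T (M+j) x) (y : ℝ) :
    T M y * T M (y+2) = 1 + T (M-1) (y+1) ^ 2 := by
  have h := hsys M hM (by omega) (y+1)
  rw [← hdual 1 le_rfl hM, add_sub_cancel_right, show y+1+1 = y+2 by ring] at h
  linear_combination h

theorem sin_psi_pair_general (M : ℕ) (hM : 2 ≤ M) (T : ℕ → ℝ → ℝ)
    (hpos : ∀ j, j ≤ 2*M → ∀ x, 0 < T j x)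
    (hsys : ∀ j, 1 ≤ j → j ≤ 2*M-1 → ∀ x : ℝ,
      T j (x+1) * T j (x-1) = 1 + T (j+1) x * T (j-1) x)
    (hdual : ∀ j, 1 ≤ j → j ≤ M → ∀ x : ℝ, T (M-j) x = T (M+j) x)
    (hgen : ∀ x : ℝ, T M (x+2) * T 1 (x+((M:ℝ)+3)) = T (M-1) (x+1) + T (M-1) (x+3))
    (ψ : ℝ → ℝ)
    (hψ : ∀ x, ψ x = Real.arcsin (1 / Real.sqrt (T M x * T M (x+2)))) :
    ∀ x : ℝ, Real.sin (ψ x + ψ (x+2)) =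
      T 1 (x+((M:ℝ)+3)) / Real.sqrt (T M x * T M (x+4)) := by
  intro x
  have hmid := T_mul_T_shift_two_of_dual (by omega) hsys hdual
  have hT : ∀ j, j ≤ 2*M → ∀ y, 0 ≤ T j y := fun j hj y => (hpos j hj y).le
  have hx4 : x + 2 + 2 = x + 4 := by ring
  rw [hψ, hψ, hmid, hmid, sin_add_arcsin_one_div_sqrt_one_add_sq (hT _ (by omega) _)
    (hT _ (by omega) _), ← hmid, ← hmid, hx4, sqrt_mul_mul_sqrt_mul (hT _ (by omega) _)
    (hT _ (by omega) _), show x + 2 + 1 = x + 3 by ring, ← hgen]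
  exact mul_div_mul_left _ _ (hpos M (by omega) _).ne'

theorem sin_psi_pair (M : ℕ) (hM : 2 ≤ M) (T : ℕ → ℝ → ℝ)
    (hpos : ∀ j, j ≤ 2*M → ∀ x, 0 < T j x)
    (h0 : ∀ x, T 0 x = 1)
    (hsys : ∀ j, 1 ≤ j → j ≤ 2*M-1 → ∀ x : ℝ,
      T j (x+1) * T j (x-1) = 1 + T (j+1) x * T (j-1) x)
    (hdual : ∀ j, 1 ≤ j → j ≤ M → ∀ x : ℝ, T (M-j) x = T (M+j) x)
    (hgen : ∀ x : ℝ, T M (x+2) * T 1 (x+((M:ℝ)+3)) = T (M-1) (x+1) + T (M-1) (x+3))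
    (ψ : ℝ → ℝ)
    (hψ : ∀ x, ψ x = Real.arcsin (1 / Real.sqrt (T M x * T M (x+2)))) :
    ∀ x : ℝ, Real.sin (ψ x + ψ (x+2)) =
      T 1 (x+((M:ℝ)+3)) / Real.sqrt (T M x * T M (x+4)) :=
  sin_psi_pair_general M hM T hpos hsys hdual hgen ψ hψ
end

section
/- Let M ≥ 2 and T : ℕ → ℝ → ℝ be positive functions satisfying the T-system T_j(x+1)T_j(x-1) = 1 + T_{j+1}(x)T_{j-1}(x) (1 ≤ j ≤ 2M-1), T_0 = 1, and duality T_{M-j} = T_{M+j}, and assume that T_{M-1}(x+1)·T_{M-1}(x+3) = 1 + T_M(x+2)·T_{M-2}(x+2) holds for all x. Define ψ(x) = arcsin(1/√(T_M(x)T_M(x+2))). Then cos(ψ(x) + ψ(x+2)) = T_{M-2}(x+2)/√(T_M(x)·T_M(x+4)). -/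
open Real

theorem cos_psi_pair (M : ℕ) (hM : 2 ≤ M) (T : ℕ → ℝ → ℝ)
    (hpos : ∀ j, j ≤ 2*M → ∀ x, 0 < T j x)
    (h0 : ∀ x, T 0 x = 1)
    (hsys : ∀ j, 1 ≤ j → j ≤ 2*M-1 → ∀ x : ℝ,
      T j (x+1) * T j (x-1) = 1 + T (j+1) x * T (j-1) x)
    (hdual : ∀ j, 1 ≤ j → j ≤ M → ∀ x : ℝ, T (M-j) x = T (M+j) x)
    (hid : ∀ x : ℝ, T (M-1) (x+1) * T (M-1) (x+3) = 1 + T M (x+2) * T (M-2) (x+2))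
    (ψ : ℝ → ℝ)
    (hψ : ∀ x, ψ x = Real.arcsin (1 / Real.sqrt (T M x * T M (x+2)))) :
    ∀ x : ℝ, Real.cos (ψ x + ψ (x+2)) =
      T (M-2) (x+2) / Real.sqrt (T M x * T M (x+4)) := by
  -- key : T M x * T M (x+2) = 1 + (T (M-1) (x+1))^2
  have key : ∀ x : ℝ, T M x * T M (x+2) = 1 + (T (M-1) (x+1))^2 := by
    intro x
    have h1 := hsys M (by omega) (by omega) (x+1)
    have hd := hdual 1 (by norm_num) (by omega) (x+1)
    have e1 : x + 1 + 1 = x + 2 := by ring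
    have e2 : x + 1 - 1 = x := by ring
    rw [e1, e2] at h1
    rw [show M - 1 = M - 1 from rfl] at hd
    rw [show M + 1 = M + 1 from rfl] at h1
    have : T (M+1) (x+1) = T (M-1) (x+1) := (hd).symm
    rw [this] at h1
    nlinarith [h1]
  have hpM : ∀ x : ℝ, 0 < T M x := hpos M (by omega)
  have hp1 : ∀ x : ℝ, 0 < T (M-1) x := hpos (M-1) (by omega)
  have hp2 : ∀ x : ℝ, 0 < T (M-2) x := hpos (M-2) (by omega)
  -- sin and cos of ψ
  have hsin : ∀ x : ℝ, Real.sin (ψ x) = 1 / Real.sqrt (T M x * T M (x+2)) := by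
    intro x
    rw [hψ x, Real.sin_arcsin]
    · have h1 : (1:ℝ) ≤ T M x * T M (x+2) := by
        have := key x; nlinarith [sq_nonneg (T (M-1) (x+1))]
      have hs : (1:ℝ) ≤ Real.sqrt (T M x * T M (x+2)) := by
        rw [show (1:ℝ) = Real.sqrt 1 from (Real.sqrt_one).symm]
        exact Real.sqrt_le_sqrt h1
      have : (0:ℝ) ≤ 1 / Real.sqrt (T M x * T M (x+2)) := by positivity
      linarith
    · have h1 : (1:ℝ) ≤ T M x * T M (x+2) := by
        have := key x; nlinarith [sq_nonneg (T (M-1) (x+1))]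
      have hs : (1:ℝ) ≤ Real.sqrt (T M x * T M (x+2)) := by
        rw [show (1:ℝ) = Real.sqrt 1 from (Real.sqrt_one).symm]
        exact Real.sqrt_le_sqrt h1
      rw [div_le_one (by linarith)]
      linarith
  have hcos : ∀ x : ℝ, Real.cos (ψ x) = T (M-1) (x+1) / Real.sqrt (T M x * T M (x+2)) := by
    intro x
    have hab : (0:ℝ) < T M x * T M (x+2) := mul_pos (hpM x) (hpM (x+2))
    have hsq : Real.sqrt (T M x * T M (x+2)) ^ 2 = T M x * T M (x+2) :=
      Real.sq_sqrt hab.le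
    have hspos : 0 < Real.sqrt (T M x * T M (x+2)) := Real.sqrt_pos.mpr hab
    rw [hψ x, Real.cos_arcsin]
    have h2 : 1 - (1 / Real.sqrt (T M x * T M (x+2)))^2
        = (T (M-1) (x+1) / Real.sqrt (T M x * T M (x+2)))^2 := by
      field_simp
      have hs2 := Real.sq_sqrt (show (0:ℝ) ≤ 1 + T (M-1) (x+1)^2 by positivity)
      rw [key x]; linear_combination hs2
    rw [h2, Real.sqrt_sq (div_nonneg (hp1 _).le (Real.sqrt_nonneg _))]
  intro x
  rw [Real.cos_add, hcos x, hcos (x+2), hsin x, hsin (x+2)]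
  have e3 : x + 2 + 2 = x + 4 := by ring
  have e4 : x + 2 + 1 = x + 3 := by ring
  rw [e3, e4]
  have ha := hpM x
  have hb := hpM (x+2)
  have hc := hpM (x+4)
  have hsa : Real.sqrt (T M x * T M (x+2)) = Real.sqrt (T M x) * Real.sqrt (T M (x+2)) :=
    Real.sqrt_mul ha.le _
  have hsb : Real.sqrt (T M (x+2) * T M (x+4)) = Real.sqrt (T M (x+2)) * Real.sqrt (T M (x+4)) :=
    Real.sqrt_mul hb.le _
  have hsc : Real.sqrt (T M x * T M (x+4)) = Real.sqrt (T M x) * Real.sqrt (T M (x+4)) :=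
    Real.sqrt_mul ha.le _
  have sa : 0 < Real.sqrt (T M x) := Real.sqrt_pos.mpr ha
  have sb : 0 < Real.sqrt (T M (x+2)) := Real.sqrt_pos.mpr hb
  have sc : 0 < Real.sqrt (T M (x+4)) := Real.sqrt_pos.mpr hc
  have hb2 : Real.sqrt (T M (x+2)) ^ 2 = T M (x+2) := Real.sq_sqrt hb.le
  rw [hsa, hsb, hsc]
  have hmain : T (M-1) (x+1) * T (M-1) (x+3) - 1 = T M (x+2) * T (M-2) (x+2) := by
    have := hid x; linarith
  field_simp
  rw [hmain]
  linear_combination (-T (M-2) (x+2)) * hb2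
end

section
/- Let M ≥ 2 and T : ℕ → ℝ → ℝ be positive functions satisfying the T-system T_j(x+1)T_j(x−1) = 1 + T_{j+1}(x)T_{j−1}(x) for 1 ≤ j ≤ 2M−1, T_0 = 1, duality T_{M−j} = T_{M+j}, and suppose each T_j(x) → L_j as x → ∞ for constants L_j > 0 with L_0 = 1 and L_{2M+1} = 0. Then the limits satisfy L_j² = 1 + L_{j+1}L_{j−1} with L_{M−j} = L_{M+j}, and consequently L_j = sin((j+1)π/(2M+2))/sin(π/(2M+2)) for 0 ≤ j ≤ 2M; in particular L_M = 1/sin(π/(2M+2)). -/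
open Real Filter

theorem asymptotic_values (M : ℕ) (hM : 2 ≤ M) (T : ℕ → ℝ → ℝ) (L : ℕ → ℝ)
    (hpos : ∀ j, j ≤ 2*M → ∀ x, 0 < T j x)
    (h0 : ∀ x, T 0 x = 1)
    (htop : ∀ x, T (2*M+1) x = 0)
    (hsys : ∀ j, 1 ≤ j → j ≤ 2*M-1 → ∀ x : ℝ,
      T j (x+1) * T j (x-1) = 1 + T (j+1) x * T (j-1) x)
    (hdual : ∀ j, 1 ≤ j → j ≤ M → ∀ x : ℝ, T (M-j) x = T (M+j) x)
    (hlim : ∀ j, j ≤ 2*M+1 → Tendsto (T j) atTop (nhds (L j)))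
    (hLpos : ∀ j, j ≤ 2*M → 0 < L j)
    (hL0 : L 0 = 1) (hLtop : L (2*M+1) = 0) :
    (∀ j, 1 ≤ j → j ≤ 2*M-1 → (L j)^2 = 1 + L (j+1) * L (j-1)) ∧
    (∀ j, 1 ≤ j → j ≤ M → L (M-j) = L (M+j)) ∧
    (∀ j, j ≤ 2*M → L j = Real.sin (((j:ℝ)+1)*π/(2*(M:ℝ)+2)) / Real.sin (π/(2*(M:ℝ)+2))) ∧
    L M = 1 / Real.sin (π/(2*(M:ℝ)+2)) := by
  -- Step A: Q-system for limits
  have hQ : ∀ j, 1 ≤ j → j ≤ 2*M-1 → (L j)^2 = 1 + L (j+1) * L (j-1) := by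
    intro j hj1 hj2
    have hjp : j + 1 ≤ 2*M + 1 := by omega
    have hjm : j - 1 ≤ 2*M + 1 := by omega
    have t1 : Tendsto (fun x : ℝ => x + 1) atTop atTop :=
      tendsto_atTop_add_const_right atTop 1 tendsto_id
    have t2 : Tendsto (fun x : ℝ => x - 1) atTop atTop := by
      simpa [sub_eq_add_neg] using tendsto_atTop_add_const_right atTop (-1 : ℝ) tendsto_id
    have l1 : Tendsto (fun x : ℝ => T j (x+1) * T j (x-1)) atTop (nhds (L j * L j)) :=
      ((hlim j (by omega)).comp t1).mul ((hlim j (by omega)).comp t2)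
    have l2 : Tendsto (fun x : ℝ => T j (x+1) * T j (x-1)) atTop
        (nhds (1 + L (j+1) * L (j-1))) := by
      have : Tendsto (fun x : ℝ => 1 + T (j+1) x * T (j-1) x) atTop
          (nhds (1 + L (j+1) * L (j-1))) :=
        (tendsto_const_nhds.add ((hlim (j+1) hjp).mul (hlim (j-1) hjm)))
      exact this.congr (fun x => (hsys j hj1 hj2 x).symm)
    have := tendsto_nhds_unique l1 l2
    rw [sq]; exact this
  -- Step B: duality for limits
  have hD : ∀ j, 1 ≤ j → j ≤ M → L (M-j) = L (M+j) := by
    intro j hj1 hj2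
    have h1 : Tendsto (T (M+j)) atTop (nhds (L (M-j))) := by
      have := hlim (M-j) (by omega)
      exact this.congr (fun x => hdual j hj1 hj2 x)
    exact tendsto_nhds_unique h1 (hlim (M+j) (by omega))
  refine ⟨hQ, hD, ?_⟩
  -- L (2M) = 1
  have hL2M : L (2*M) = 1 := by
    have := hD M (by omega) le_rfl
    simp only [Nat.sub_self] at this
    rw [← two_mul] at this
    rw [← this, hL0]
  -- L 1 > 1
  have hL1 : 1 < L 1 := by
    have h := hQ 1 le_rfl (by omega)
    simp only [hL0] at h
    nlinarith [hLpos 1 (by omega), hLpos 2 (by omega)]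
  -- linear recursion
  have hlin : ∀ i, i + 2 ≤ 2*M → L (i+2) + L i = L 1 * L (i+1) := by
    intro i
    induction i with
    | zero =>
      intro _
      have h := hQ 1 le_rfl (by omega)
      simp only [hL0] at h ⊢
      nlinarith
    | succ i ih =>
      intro hi
      have IH := ih (by omega)
      have h1 := hQ (i+1) (by omega) (by omega)
      have h2 := hQ (i+2) (by omega) (by omega)
      have r1 : i + 1 - 1 = i := by omega
      have r2 : i + 2 - 1 = i + 1 := by omega
      have r3 : i + 1 + 1 = i + 2 := by omega
      have r4 : i + 2 + 1 = i + 3 := by omega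
      rw [r1, r3] at h1; rw [r2, r4] at h2
      have hp : L (i+1) ≠ 0 := ne_of_gt (hLpos (i+1) (by omega))
      have key : (L (i+3) + L (i+1)) * L (i+1) = (L 1 * L (i+2)) * L (i+1) := by
        linear_combination h1 - h2 + L (i+2) * IH
      exact mul_right_cancel₀ hp key
  -- L 1 < 2
  have hc2 : L 1 < 2 := by
    by_contra hc
    push_neg at hc
    have mono : ∀ i, i + 1 ≤ 2*M → L 1 - 1 ≤ L (i+1) - L i := by
      intro i
      induction i with
      | zero => intro _; rw [hL0]
      | succ i ih =>
        intro hi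
        have IH := ih (by omega)
        have h := hlin i (by omega)
        have := hLpos (i+1) (by omega)
        nlinarith
    have grow : ∀ i, i ≤ 2*M → 1 + (i:ℝ) * (L 1 - 1) ≤ L i := by
      intro i
      induction i with
      | zero => intro _; rw [hL0]; norm_num
      | succ i ih =>
        intro hi
        have IH := ih (by omega)
        have h := mono i (by omega)
        push_cast
        linarith
    have := grow (2*M) le_rfl
    rw [hL2M] at this
    have hMr : (4:ℝ) ≤ (2*M : ℕ) := by
      have : (4:ℕ) ≤ 2*M := by omega
      exact_mod_cast this
    nlinarith
  -- set up θ
  set θ := Real.arccos (L 1 / 2) with hθdef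
  have hcos : Real.cos θ = L 1 / 2 :=
    Real.cos_arccos (by linarith) (by linarith)
  have hθpos : 0 < θ := by
    rw [hθdef]
    rw [Real.arccos_pos]
    linarith
  have hθlt : θ < π / 2 := by
    by_contra h
    push_neg at h
    have : Real.cos θ ≤ 0 :=
      Real.cos_nonpos_of_pi_div_two_le_of_le h (by
        have := Real.arccos_le_pi (L 1 / 2)
        rw [← hθdef] at this
        linarith [Real.pi_pos])
    rw [hcos] at this
    linarith
  have hθpi : θ < π := by linarith [Real.pi_pos]
  have hsinθ : 0 < Real.sin θ := Real.sin_pos_of_pos_of_lt_pi hθpos hθpi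
  -- the sine formula
  have formula : ∀ j, j ≤ 2*M → L j * Real.sin θ = Real.sin (((j:ℝ)+1) * θ) := by
    intro j
    induction j using Nat.strong_induction_on with
    | _ j ih =>
      match j with
      | 0 => intro _; rw [hL0]; norm_num
      | 1 =>
        intro _
        have : ((1:ℕ):ℝ) + 1 = 2 := by norm_num
        rw [this, Real.sin_two_mul, hcos]
        ring
      | (i+2) =>
        intro hj
        have h1 := ih (i+1) (by omega) (by omega)
        have h0 := ih i (by omega) (by omega)
        have hrec := hlin i (by omega)
        push_cast at h1 h0 ⊢
        have trig : Real.sin (((i:ℝ)+2+1) * θ) =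
            2 * Real.cos θ * Real.sin (((i:ℝ)+1+1)*θ) - Real.sin (((i:ℝ)+1)*θ) := by
          have e1 : ((i:ℝ)+2+1)*θ = ((i:ℝ)+1+1)*θ + θ := by ring
          have e2 : ((i:ℝ)+1)*θ = ((i:ℝ)+1+1)*θ - θ := by ring
          rw [e1, e2, Real.sin_add, Real.sin_sub]
          ring
        rw [trig]
        linear_combination Real.sin θ * hrec + L 1 * h1 - h0 -
          2 * Real.sin (((i:ℝ)+1+1)*θ) * hcos
  -- positivity of sin(kθ)
  have sinpos : ∀ k, 1 ≤ k → k ≤ 2*M+1 → 0 < Real.sin ((k:ℝ) * θ) := by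
    intro k hk1 hk2
    obtain ⟨k', rfl⟩ : ∃ k', k = k' + 1 := ⟨k - 1, by omega⟩
    have hf := formula k' (by omega)
    push_cast
    rw [← hf]
    exact mul_pos (hLpos k' (by omega)) hsinθ
  -- kθ < π for k ≤ 2M+1
  have ltpi : ∀ k, k ≤ 2*M+1 → (k:ℝ) * θ < π := by
    intro k
    induction k with
    | zero => intro _; simpa using Real.pi_pos
    | succ k ih =>
      intro hk
      have IH := ih (by omega)
      by_contra h
      push_neg at h
      push_cast at h
      have hub : ((k:ℝ)+1) * θ < 2 * π := by nlinarith [Real.pi_pos]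
      have hs : Real.sin (((k:ℝ)+1)*θ) ≤ 0 := by
        rw [← Real.sin_sub_two_pi]
        exact Real.sin_nonpos_of_nonpos_of_neg_pi_le (by linarith) (by linarith)
      have := sinpos (k+1) (by omega) (by omega)
      push_cast at this
      linarith
  -- determine θ
  have hMθ : 0 < Real.sin ((M:ℝ) * θ) := by
    have := sinpos M (by omega) (by omega)
    exact this
  have hsineq : Real.sin (((M:ℝ)+1) * θ + (M:ℝ) * θ) = Real.sin θ := by
    have hf := formula (2*M) le_rfl
    rw [hL2M, one_mul] at hf
    push_cast at hf
    have a1 : ((M:ℝ)+1) * θ + (M:ℝ) * θ = (2*(M:ℝ)+1) * θ := by ring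
    rw [a1]
    exact hf.symm
  have hcoszero : Real.cos (((M:ℝ)+1) * θ) = 0 := by
    have expand : Real.sin (((M:ℝ)+1)*θ + (M:ℝ)*θ) - Real.sin (((M:ℝ)+1)*θ - (M:ℝ)*θ)
        = 2 * Real.cos (((M:ℝ)+1)*θ) * Real.sin ((M:ℝ)*θ) := by
      rw [Real.sin_add, Real.sin_sub]
      ring
    have a2 : ((M:ℝ)+1)*θ - (M:ℝ)*θ = θ := by ring
    rw [a2, hsineq] at expand
    have h0' : 2 * Real.cos (((M:ℝ)+1)*θ) * Real.sin ((M:ℝ)*θ) = 0 := by linarith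
    rcases mul_eq_zero.mp h0' with h | h
    · rcases mul_eq_zero.mp h with h' | h'
      · norm_num at h'
      · exact h'
    · linarith
  have hθval : θ = π / (2*(M:ℝ)+2) := by
    obtain ⟨n, hn⟩ := Real.cos_eq_zero_iff.mp hcoszero
    have hlt : ((M:ℝ)+1) * θ < π := by
      have := ltpi (M+1) (by omega)
      push_cast at this
      exact this
    have hpos' : 0 < ((M:ℝ)+1) * θ := by
      have : (0:ℝ) < (M:ℝ)+1 := by positivity
      exact mul_pos this hθpos
    have hn0 : n = 0 := by
      by_contra hn0
      rcases lt_or_gt_of_ne hn0 with h | h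
      · have hle : n ≤ -1 := by omega
        have hle' : (n:ℝ) ≤ -1 := by exact_mod_cast hle
        nlinarith [Real.pi_pos]
      · have hge : (1:ℤ) ≤ n := h
        have hge' : (1:ℝ) ≤ (n:ℝ) := by exact_mod_cast hge
        nlinarith [Real.pi_pos]
    rw [hn0] at hn
    norm_num at hn
    have hne : (2*(M:ℝ)+2) ≠ 0 := by positivity
    field_simp
    linear_combination 2*hn
  have hsinθ' : Real.sin (π/(2*(M:ℝ)+2)) = Real.sin θ := by rw [hθval]
  have hs2 : 0 < Real.sin (π/(2*(M:ℝ)+2)) := by rw [hsinθ']; exact hsinθ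
  constructor
  · intro j hj
    have hf := formula j hj
    rw [hθval] at hf
    rw [eq_div_iff (ne_of_gt hs2)]
    rw [show ((j:ℝ)+1)*π/(2*(M:ℝ)+2) = ((j:ℝ)+1)*(π/(2*(M:ℝ)+2)) from mul_div_assoc _ _ _]
    exact hf
  · have hf := formula M (by omega)
    have hang : ((M:ℝ)+1) * θ = π/2 := by
      rw [hθval]
      have hne : (2*(M:ℝ)+2) ≠ 0 := by positivity
      field_simp
    rw [hang, Real.sin_pi_div_two] at hf
    rw [hsinθ', eq_div_iff (ne_of_gt hsinθ)]
    linarith [hf]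
end

section
/- Let M ≥ 2 and T : ℕ → ℝ → ℝ positive satisfying the T-system T_j(x+1)T_j(x−1) = 1 + T_{j+1}(x)T_{j−1}(x) (1 ≤ j ≤ 2M−1, T_0 = 1, T_{2M+1} = 0) and duality T_{M−j} = T_{M+j}, and suppose moreover that the generalized T-system identity T_M(x+2)T_1(x+M+3) = T_{M−1}(x+1) + T_{M−1}(x+3) holds. Then for every x, the matrix L(x) with rows (T_{M−2}(x+2), −T_1(x+M+3)) and (T_1(x+M+3), T_{M−2}(x+2)) satisfies det L(x) = T_{M−2}(x+2)² + T_1(x+M+3)² = T_M(x)·T_M(x+4). -/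
open Real

theorem det_L_eq (M : ℕ) (hM : 2 ≤ M) (T : ℕ → ℝ → ℝ)
    (hpos : ∀ j, j ≤ 2*M → ∀ x, 0 < T j x)
    (h0 : ∀ x, T 0 x = 1)
    (htop : ∀ x, T (2*M+1) x = 0)
    (hsys : ∀ j, 1 ≤ j → j ≤ 2*M-1 → ∀ x : ℝ,
      T j (x+1) * T j (x-1) = 1 + T (j+1) x * T (j-1) x)
    (hdual : ∀ j, 1 ≤ j → j ≤ M → ∀ x : ℝ, T (M-j) x = T (M+j) x)
    (hgen : ∀ x : ℝ, T M (x+2) * T 1 (x+((M:ℝ)+3)) = T (M-1) (x+1) + T (M-1) (x+3)) :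
    ∀ x : ℝ, (T (M-2) (x+2))^2 + (T 1 (x+((M:ℝ)+3)))^2 = T M x * T M (x+4) := by
  intro x
  have hc : 0 < T M (x+2) := hpos M (by omega) _
  -- h1 : T M (x+2) * T M x = 1 + T (M-1) (x+1) * T (M-1) (x+1)
  have h1 := hsys M (by omega) (by omega) (x+1)
  rw [show (x+1+1 : ℝ) = x+2 by ring, show (x+1-1 : ℝ) = x by ring,
      ← hdual 1 le_rfl (by omega) (x+1)] at h1
  rw [show M - 1 = M + 1 - 2*1 by omega] at h1
  rw [show M + 1 - 2*1 = M - 1 by omega] at h1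
  have h2 := hsys M (by omega) (by omega) (x+3)
  rw [show (x+3+1 : ℝ) = x+4 by ring, show (x+3-1 : ℝ) = x+2 by ring,
      ← hdual 1 le_rfl (by omega) (x+3)] at h2
  have h3 := hsys (M-1) (by omega) (by omega) (x+2)
  rw [show (x+2+1 : ℝ) = x+3 by ring, show (x+2-1 : ℝ) = x+1 by ring,
      show M-1+1 = M by omega, show M-1-1 = M-2 by omega] at h3
  have h4 := hgen x
  set p := T (M-1) (x+1)
  set q := T (M-1) (x+3)
  set a := T (M-2) (x+2)
  set b := T 1 (x+((M:ℝ)+3))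
  set c := T M (x+2)
  have key : c^2 * (a^2 + b^2) = c^2 * (T M x * T M (x+4)) := by
    linear_combination (-(c*a + p*q - 1)) * h3 + (c*b + p + q) * h4
      + (-(1+q^2)) * h1 + (-(c * T M x)) * h2
  exact mul_left_cancel₀ (pow_ne_zero 2 hc.ne') key
end
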